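/- Let r > 1 be a real number and suppose (x, y) is a gap of cl(σ_{-r}(ℕ)). Then y ∈ σ_{-r}(ℕ); that is, there exists a positive integer b with σ_{-r}(b) = y. -/

import Mathlib

/-!
No point of the closure lies in `(x, y)`, so `y` is a limit of values `σ(s) ≥ y`. For such an `s`,
the least divisor `d` of `s` with `σ(d) ≥ y` satisfies `σ(d / p) ≤ x` for every prime `p ∣ d`, while
`σ(d) - σ(d / p) = p^{-ra} σ(d / p^a)` where `p^a ∥ d`. As `r ≥ 1`, this forces
`p^a ≤ σ(s) / (y - x)`. Hence all these `d` divide one factorial, their values form a finite set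
approximating `y` from above, and `y` belongs to it.
-/

open scoped BigOperators

/-- The divisor function `σ_{-r}(n) = ∑_{d ∣ n} d^{-r}`. -/
noncomputable def sigmaNeg (r : ℝ) (n : ℕ) : ℝ := ∑ d ∈ n.divisors, (d : ℝ) ^ (-r)

/-- `u_p(r) = ∏_{q prime, q > p} (1 - q^{-r})⁻¹`. -/
noncomputable def uAfter (r : ℝ) (p : ℕ) : ℝ :=
  ∏' q : {q : Nat.Primes // p < (q : ℕ)}, (1 - ((q.1 : ℕ) : ℝ) ^ (-r))⁻¹

/-- A prime `p` is `r`-mighty if `1 + p^{-r} > ∏_{q prime, q > p} (1 - q^{-r})⁻¹`. -/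
def Mighty (r : ℝ) (p : ℕ) : Prop := uAfter r p < 1 + (p : ℝ) ^ (-r)

/-- `f_p(k) = σ_{-r}(p^k)` for finite `k`, and `f_p(∞) = (1 - p^{-r})⁻¹`. -/
noncomputable def fReal (r : ℝ) (p : ℕ) (k : ℕ∞) : ℝ :=
  if k = ⊤ then (1 - (p : ℝ) ^ (-r))⁻¹
  else ∑ j ∈ Finset.range (k.toNat + 1), ((p : ℝ) ^ (-r)) ^ j

/-- The value of `σ_{-r}` on the Steinitz number encoded by `α`. -/
noncomputable def steinitzVal (r : ℝ) (α : Nat.Primes → ℕ∞) : ℝ :=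
  ∏' p : Nat.Primes, fReal r (p : ℕ) (α p)

/-- The topological closure of the image `σ_{-r}(ℕ)` in `ℝ`. -/
noncomputable def sigmaClosure (r : ℝ) : Set ℝ :=
  closure (Set.range fun n : ℕ+ => sigmaNeg r (n : ℕ))

open Nat Finset

section

variable (r : ℝ)

lemma sigmaNeg_le_of_dvd {m n : ℕ} (h : m ∣ n) (hn : n ≠ 0) : sigmaNeg r m ≤ sigmaNeg r n :=
  sum_le_sum_of_subset_of_nonneg (divisors_subset_of_dvd hn h)
    fun d _ _ => Real.rpow_nonneg d.cast_nonneg _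

lemma sigmaNeg_mul_of_coprime {m n : ℕ} (h : m.Coprime n) :
    sigmaNeg r (m * n) = sigmaNeg r m * sigmaNeg r n := by
  rw [sigmaNeg, divisors_mul, Finset.mul_def, sum_image h.mul_injOn_divisors, sum_product, sigmaNeg,
    sigmaNeg, sum_mul_sum]
  refine sum_congr rfl fun a _ => sum_congr rfl fun b _ => ?_
  push_cast
  exact Real.mul_rpow a.cast_nonneg b.cast_nonneg

lemma sigmaNeg_prime_pow_succ {p : ℕ} (hp : p.Prime) (k : ℕ) :
    sigmaNeg r (p ^ (k + 1)) = sigmaNeg r (p ^ k) + ((p ^ (k + 1) : ℕ) : ℝ) ^ (-r) := by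
  rw [sigmaNeg, sigmaNeg, sum_divisors_prime_pow hp, sum_divisors_prime_pow hp,
    sum_range_succ _ (k + 1)]

lemma sigmaNeg_sub_sigmaNeg_div_prime {p d : ℕ} (hp : p.Prime) (hpd : p ∣ d) (hd : d ≠ 0) :
    sigmaNeg r d - sigmaNeg r (d / p) =
      ((ordProj[p] d : ℕ) : ℝ) ^ (-r) * sigmaNeg r (ordCompl[p] d) := by
  obtain ⟨k, hk⟩ := exists_eq_add_one_of_ne_zero (hp.factorization_pos_of_dvd hd hpd).ne'
  set t := ordCompl[p] d
  have hcop (j : ℕ) : (p ^ j).Coprime t := (coprime_ordCompl hp hd).pow_left j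
  have hdt : d = p ^ (k + 1) * t := by rw [← hk]; exact (ordProj_mul_ordCompl_eq_self d p).symm
  have hdp : d / p = p ^ k * t := by
    rw [hdt, pow_succ', mul_assoc, Nat.mul_div_cancel_left _ hp.pos]
  rw [hdp, hk, hdt, sigmaNeg_mul_of_coprime r (hcop _), sigmaNeg_mul_of_coprime r (hcop _),
    sigmaNeg_prime_pow_succ r hp]
  ring

lemma sigmaNeg_sub_sigmaNeg_div_prime_mul_ordProj_le (hr : 1 ≤ r) {p d : ℕ} (hp : p.Prime)
    (hpd : p ∣ d) (hd : d ≠ 0) :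
    (sigmaNeg r d - sigmaNeg r (d / p)) * (ordProj[p] d : ℕ) ≤ sigmaNeg r d := by
  set q : ℝ := ↑(ordProj[p] d)
  have hq : 1 ≤ q := Nat.one_le_cast.mpr (Nat.one_le_pow _ _ hp.pos)
  have hqr : q ^ (-r) * q ≤ 1 := calc
    q ^ (-r) * q ≤ q ^ (-1 : ℝ) * q := by gcongr
    _ = 1 := by rw [Real.rpow_neg_one, inv_mul_cancel₀ (by positivity)]
  have hσ : 0 ≤ sigmaNeg r (ordCompl[p] d) :=
    sum_nonneg fun e _ => Real.rpow_nonneg e.cast_nonneg _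
  calc (sigmaNeg r d - sigmaNeg r (d / p)) * q
      = q ^ (-r) * q * sigmaNeg r (ordCompl[p] d) := by
        rw [sigmaNeg_sub_sigmaNeg_div_prime r hp hpd hd]; ring
    _ ≤ sigmaNeg r (ordCompl[p] d) := mul_le_of_le_one_left hσ hqr
    _ ≤ sigmaNeg r d := sigmaNeg_le_of_dvd r (ordCompl_dvd d p) hd

end

lemma exists_dvd_factorial_le_sigmaNeg {r x y : ℝ} (hr : 1 ≤ r) (hxy : x < y)
    (hgap : ∀ n, 0 < n → sigmaNeg r n ∉ Set.Ioo x y) {s : ℕ} (hs : s ≠ 0)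
    (hys : y ≤ sigmaNeg r s) :
    ∃ d, d ∣ s ∧ d ∣ (⌊sigmaNeg r s / (y - x)⌋₊)! ∧ y ≤ sigmaNeg r d := by
  classical
  have hex : ∃ d, d ∣ s ∧ y ≤ sigmaNeg r d := ⟨s, dvd_rfl, hys⟩
  obtain ⟨hds, hyd⟩ := Nat.find_spec hex
  set d := Nat.find hex
  have hd : d ≠ 0 := ne_zero_of_dvd_ne_zero hs hds
  refine ⟨d, hds, ?_, hyd⟩
  rw [← factorization_prime_le_iff_dvd hd (factorial_ne_zero _)]
  intro p hp
  by_cases hpd : p ∣ d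
  swap
  · simp [factorization_eq_zero_of_not_dvd hpd]
  rw [← hp.pow_dvd_iff_le_factorization (factorial_ne_zero _)]
  refine dvd_factorial (Nat.pow_pos hp.pos) (le_floor ?_)
  have hdp : sigmaNeg r (d / p) ≤ x := by
    have hlt : d / p < d := div_lt_self (pos_of_ne_zero hd) hp.one_lt
    have hdp_lt : sigmaNeg r (d / p) < y :=
      not_le.1 fun h => Nat.find_min hex hlt ⟨(div_dvd_of_dvd hpd).trans hds, h⟩
    have := hgap (d / p) (div_pos (le_of_dvd (pos_of_ne_zero hd) hpd) hp.pos)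
    exact not_lt.1 fun h => this ⟨h, hdp_lt⟩
  rw [le_div_iff₀ (sub_pos.2 hxy)]
  calc ((ordProj[p] d : ℕ) : ℝ) * (y - x)
      ≤ (sigmaNeg r d - sigmaNeg r (d / p)) * (ordProj[p] d : ℕ) := by
        rw [mul_comm]; gcongr
    _ ≤ sigmaNeg r d := sigmaNeg_sub_sigmaNeg_div_prime_mul_ordProj_le r hr hp hpd hd
    _ ≤ sigmaNeg r s := sigmaNeg_le_of_dvd r hds hs

lemma exists_mem_Ico_of_mem_closure {S : Set ℝ} {x y ε : ℝ} (hxy : x < y) (hy : y ∈ closure S)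
    (hgap : Set.Ioo x y ∩ closure S = ∅) (hε : 0 < ε) : ∃ z ∈ S, z ∈ Set.Ico y (y + ε) := by
  obtain ⟨z, hzS, hyz⟩ := Metric.mem_closure_iff.1 hy _ (lt_min hε (sub_pos.2 hxy))
  rw [Real.dist_eq, abs_lt] at hyz
  have hzy : y ≤ z := not_lt.1 fun hzy =>
    hgap.subset ⟨⟨by linarith [min_le_right ε (y - x)], hzy⟩, subset_closure hzS⟩
  exact ⟨z, hzS, hzy, by linarith [min_le_left ε (y - x)]⟩

theorem statement15_general (r : ℝ) (hr : 1 < r) (x y : ℝ) (hxy : x < y)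
    (hy : y ∈ sigmaClosure r)
    (hgap : Set.Ioo x y ∩ sigmaClosure r = ∅) :
    ∃ b : ℕ, 0 < b ∧ sigmaNeg r b = y := by
  have hgap_values : ∀ n, 0 < n → sigmaNeg r n ∉ Set.Ioo x y := fun n hn h =>
    hgap.subset ⟨h, subset_closure ⟨⟨n, hn⟩, rfl⟩⟩
  set N := ⌊(y + 1) / (y - x)⌋₊
  suffices y ∈ sigmaNeg r '' (N !).divisors by
    obtain ⟨d, hd, rfl⟩ := this
    exact ⟨d, pos_of_mem_divisors hd, rfl⟩
  rw [← ((N !).divisors.finite_toSet.image _).isClosed.closure_eq, Metric.mem_closure_iff]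
  intro ε hε
  obtain ⟨_, ⟨n, rfl⟩, hyn, hny⟩ := exists_mem_Ico_of_mem_closure hxy hy hgap (lt_min hε one_pos)
  obtain ⟨d, hdn, hdN, hyd⟩ := exists_dvd_factorial_le_sigmaNeg hr.le hxy hgap_values n.ne_zero hyn
  have hdn' := sigmaNeg_le_of_dvd r hdn n.ne_zero
  have hNn : ⌊sigmaNeg r n / (y - x)⌋₊ ≤ N :=
    floor_le_floor (div_le_div_of_nonneg_right (by linarith [min_le_right ε 1]) (sub_pos.2 hxy).le)
  refine ⟨sigmaNeg r d, ⟨d, mem_divisors.2 ⟨hdN.trans (factorial_dvd_factorial hNn),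
    factorial_ne_zero _⟩, rfl⟩, ?_⟩
  rw [Real.dist_eq, abs_sub_comm, abs_of_nonneg (by linarith)]
  linarith [min_le_left ε 1]

theorem statement15 (r : ℝ) (hr : 1 < r) (x y : ℝ) (hxy : x < y)
    (hx : x ∈ sigmaClosure r) (hy : y ∈ sigmaClosure r)
    (hgap : Set.Ioo x y ∩ sigmaClosure r = ∅) :
    ∃ b : ℕ, 0 < b ∧ sigmaNeg r b = y :=
  statement15_general r hr x y hxy hy hgap
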